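/- Let z_v(ω) be the output of a linear layered GNN as a function of the edge weights ω in the computation graph (each path contribution multiplied by the product of its edge weights). Then for each fixed edge (i,j) in layer ℓ, the function ω^{(ℓ)}_{ij} ↦ z_v (with all other weights fixed at 1) is an affine function of ω^{(ℓ)}_{ij}. Consequently, the layerwise edge gradient ∂z_v/∂ω^{(ℓ)}_{ij} equals the layerwise occlusion z_v(𝟙) − z_v(𝟙 with ω^{(ℓ)}_{ij} = 0). -/
import Mathlib


open Finset

variable {V : Type*} [Fintype V] [DecidableEq V]

/-- Partial paths in the layered computation graph. -/
def segPaths (Adj : ℕ → V → V → Prop) [∀ ℓ i j, Decidable (Adj ℓ i j)]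
    (off len : ℕ) (a b : V) : Finset (Fin (len + 1) → V) :=
  Finset.univ.filter fun τ =>
    τ 0 = a ∧ τ (Fin.last len) = b ∧ ∀ k : Fin len, Adj (off + k) (τ k.castSucc) (τ k.succ)

/-- Ordered product of the layer matrices along a partial path (last layer first). -/
def segProd {n : ℕ} (M : ℕ → V → V → Matrix (Fin n) (Fin n) ℝ) (off len : ℕ)
    (τ : Fin (len + 1) → V) : Matrix (Fin n) (Fin n) ℝ :=
  (List.ofFn fun k : Fin len => M (off + k) (τ k.castSucc) (τ k.succ)).reverse.prod

/-- The weighted output `z_v(ω)` of a linear layered GNN: each maximal path's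
contribution is multiplied by the product of its edge weights. -/
def weightedOutput {n : ℕ} (Adj : ℕ → V → V → Prop) [∀ ℓ i j, Decidable (Adj ℓ i j)]
    (M : ℕ → V → V → Matrix (Fin n) (Fin n) ℝ) (x : V → Fin n → ℝ) (L : ℕ) (v : V)
    (ω : ℕ → V → V → ℝ) : Fin n → ℝ :=
  ∑ u : V, ∑ π ∈ segPaths Adj 0 L u v,
    (∏ k : Fin L, ω (k : ℕ) (π k.castSucc) (π k.succ)) • (segProd M 0 L π).mulVec (x u)

/-- with all other weights fixed at 1, `z_v` is an affine function of the
single layerwise edge weight `ω^{(ℓ)}_{ij}`; consequently the layerwise edge gradient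
equals the layerwise occlusion `z_v(𝟙) − z_v(𝟙 with ω^{(ℓ)}_{ij} = 0)`. -/
theorem stmt_5 {n : ℕ} (Adj : ℕ → V → V → Prop) [∀ ℓ i j, Decidable (Adj ℓ i j)]
    (M : ℕ → V → V → Matrix (Fin n) (Fin n) ℝ) (x : V → Fin n → ℝ)
    (L : ℕ) (v : V) (ℓ : ℕ) (hℓ : ℓ < L) (i j : V)
    (Z : ℝ → Fin n → ℝ)
    (hZ : ∀ t, Z t = weightedOutput Adj M x L v
      (fun k a b => if k = ℓ ∧ a = i ∧ b = j then t else 1)) :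
    (∃ a b : Fin n → ℝ, ∀ t : ℝ, Z t = a + t • b) ∧
    HasDerivAt Z (Z 1 - Z 0) 1 := by
  have key : ∀ t : ℝ, Z t = Z 0 + t • (Z 1 - Z 0) := by
    have hp : ∀ (t : ℝ) (π : Fin (L+1) → V),
        (∏ k : Fin L, (if (k : ℕ) = ℓ ∧ π k.castSucc = i ∧ π k.succ = j then t else 1))
          = if (π (Fin.castSucc ⟨ℓ, hℓ⟩) = i ∧ π (Fin.succ ⟨ℓ, hℓ⟩) = j) then t else 1 := by
      intro t π
      rw [Finset.prod_eq_single (⟨ℓ, hℓ⟩ : Fin L)]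
      · simp
      · intro k _ hk
        have hkℓ : (k : ℕ) ≠ ℓ := fun h => hk (Fin.ext h)
        simp [hkℓ]
      · simp
    intro t
    simp only [hZ, weightedOutput, hp]
    funext m
    simp only [Pi.add_apply, Pi.smul_apply, Pi.sub_apply, Finset.sum_apply, smul_eq_mul]
    rw [← Finset.sum_sub_distrib, Finset.mul_sum, ← Finset.sum_add_distrib]
    refine Finset.sum_congr rfl fun u _ => ?_
    rw [← Finset.sum_sub_distrib, Finset.mul_sum, ← Finset.sum_add_distrib]
    refine Finset.sum_congr rfl fun π _ => ?_
    split_ifs <;> ring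
  refine ⟨⟨Z 0, Z 1 - Z 0, key⟩, ?_⟩
  have h : HasDerivAt (fun t : ℝ => Z 0 + t • (Z 1 - Z 0)) (Z 1 - Z 0) 1 := by
    simpa using ((hasDerivAt_id (1:ℝ)).smul_const (Z 1 - Z 0)).const_add (Z 0)
  exact h.congr_of_eventuallyEq (Filter.Eventually.of_forall key)
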